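/- Let κ > 0, let c ∈ [0, 1), and let u : ℝ → ℝ be a continuous function with |u(t)| ≤ c for all t and u(t) → 0 as t → ∞. Let Δ : ℝ → ℝ be differentiable with Δ'(t) = −κ·(tanh(Δ(t)) − u(t)) for all t. Then Δ(t) tends to 0 as t → ∞. -/

import Mathlib

open Real Filter

/-- tanh is monotone. -/
lemma tanh_mono' {a b : ℝ} (h : a ≤ b) : Real.tanh a ≤ Real.tanh b := by
  rw [Real.tanh_eq_sinh_div_cosh, Real.tanh_eq_sinh_div_cosh,
    div_le_div_iff₀ (Real.cosh_pos a) (Real.cosh_pos b)]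
  have h1 : 0 ≤ Real.sinh (b - a) := by
    rw [← Real.sinh_zero]; exact Real.sinh_le_sinh.2 (by linarith)
  rw [Real.sinh_sub] at h1
  nlinarith

lemma tanh_pos' {a : ℝ} (h : 0 < a) : 0 < Real.tanh a := by
  rw [Real.tanh_eq_sinh_div_cosh]
  exact div_pos (Real.sinh_pos_iff.2 h) (Real.cosh_pos a)

/-- Invariance: once below b, stays below b. -/
lemma stay_below' (f : ℝ → ℝ) (hf : Differentiable ℝ f) (b s : ℝ) (hs : f s ≤ b)
    (hd : ∀ x, s ≤ x → b < f x → deriv f x ≤ 0) :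
    ∀ t, s ≤ t → f t ≤ b := by
  intro t hst
  by_contra hlt
  push_neg at hlt
  set S : Set ℝ := {x | x ∈ Set.Icc s t ∧ f x ≤ b} with hS
  have hSne : S.Nonempty := ⟨s, ⟨le_refl s, hst⟩, hs⟩
  have hSbdd : BddAbove S := ⟨t, fun x hx => hx.1.2⟩
  have hSclosed : IsClosed S := by
    have : S = Set.Icc s t ∩ f ⁻¹' Set.Iic b := by
      ext x; simp [hS, Set.mem_Icc, and_assoc]
    rw [this]
    exact isClosed_Icc.inter (IsClosed.preimage hf.continuous isClosed_Iic)
  set s0 := sSup S with hs0def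
  have hs0mem : s0 ∈ S := hSclosed.csSup_mem hSne hSbdd
  have hs0t : s0 ≤ t := hs0mem.1.2
  have hss0 : s ≤ s0 := hs0mem.1.1
  have hfs0 : f s0 ≤ b := hs0mem.2
  have hs0lt : s0 < t := lt_of_le_of_ne hs0t (fun h => hlt.not_ge (h ▸ hfs0))
  have hgt : ∀ x ∈ Set.Ioc s0 t, b < f x := by
    intro x hx
    by_contra hxb
    push_neg at hxb
    have hmem : x ∈ S := ⟨⟨hss0.trans hx.1.le, hx.2⟩, hxb⟩
    exact hx.1.not_ge (le_csSup hSbdd hmem)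
  have hanti : AntitoneOn f (Set.Icc s0 t) := by
    apply antitoneOn_of_deriv_nonpos (convex_Icc s0 t) hf.continuous.continuousOn
      (hf.differentiableOn.mono interior_subset)
    intro x hx
    rw [interior_Icc] at hx
    exact hd x (hss0.trans hx.1.le) (hgt x ⟨hx.1, hx.2.le⟩)
  exact hlt.not_ge ((hanti ⟨le_refl s0, hs0t⟩ ⟨hs0t, le_refl t⟩ hs0t).trans hfs0)

/-- Reach and stay: if the derivative is ≤ -δ whenever f > b (after time T),
then eventually f ≤ b. -/
lemma eventually_le_of_deriv' (f : ℝ → ℝ) (hf : Differentiable ℝ f) (b δ T : ℝ) (hδ : 0 < δ)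
    (hd : ∀ x, T ≤ x → b < f x → deriv f x ≤ -δ) :
    ∀ᶠ t in atTop, f t ≤ b := by
  have hd0 : ∀ x, T ≤ x → b < f x → deriv f x ≤ 0 := fun x hx hbx =>
    (hd x hx hbx).trans (by linarith)
  have hreach : ∃ t0, T ≤ t0 ∧ f t0 ≤ b := by
    by_contra hcon
    push_neg at hcon
    have hT : b < f T := hcon T (le_refl T)
    set t1 := T + (f T - b) / δ + 1 with ht1
    have hq : 0 < (f T - b) / δ := div_pos (by linarith) hδ
    have hTt1 : T < t1 := by rw [ht1]; linarith
    set g : ℝ → ℝ := fun x => f x + δ * x with hg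
    have hgdiff : Differentiable ℝ g := hf.add (differentiable_id.const_mul δ)
    have hgd : ∀ x, deriv g x = deriv f x + δ := by
      intro x
      have h1 : HasDerivAt g (deriv f x + δ * 1) x :=
        (hf x).hasDerivAt.add ((hasDerivAt_id x).const_mul δ)
      simpa using h1.deriv
    have hanti : AntitoneOn g (Set.Icc T t1) := by
      apply antitoneOn_of_deriv_nonpos (convex_Icc T t1) hgdiff.continuous.continuousOn
        (hgdiff.differentiableOn.mono interior_subset)
      intro x hx
      rw [interior_Icc] at hx
      rw [hgd x]
      have := hd x hx.1.le (hcon x hx.1.le)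
      linarith
    have hle : g t1 ≤ g T :=
      hanti ⟨le_refl T, hTt1.le⟩ ⟨hTt1.le, le_refl t1⟩ hTt1.le
    have hft1 : f t1 + δ * t1 ≤ f T + δ * T := hle
    have hδt1 : δ * t1 = δ * T + (f T - b) + δ := by
      rw [ht1]; field_simp
    have : f t1 ≤ b - δ := by linarith
    exact absurd (hcon t1 hTt1.le) (by linarith)
  obtain ⟨t0, hTt0, ht0⟩ := hreach
  filter_upwards [eventually_ge_atTop t0] with t ht
  exact stay_below' f hf b t0 ht0 (fun x hx => hd0 x (hTt0.trans hx)) t ht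

/-- Perturbed scalar tanh-feedback ODE: if the perturbation is bounded in magnitude
by some c < 1 and tends to 0, then the state tends to 0. -/
theorem perturbed_tanh_feedback_convergence
    (κ : ℝ) (hκ : 0 < κ)
    (c : ℝ) (hc0 : 0 ≤ c) (hc1 : c < 1)
    (u : ℝ → ℝ) (hu_cont : Continuous u)
    (hu_bdd : ∀ t, |u t| ≤ c)
    (hu_lim : Tendsto u atTop (nhds 0))
    (Δ : ℝ → ℝ) (hΔ : Differentiable ℝ Δ)
    (hode : ∀ t, deriv Δ t = -κ * (Real.tanh (Δ t) - u t)) :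
    Tendsto Δ atTop (nhds 0) := by
  rw [NormedAddCommGroup.tendsto_nhds_zero]
  intro ε hε
  set ε' := ε / 2 with hε'
  have hε'pos : 0 < ε' := by positivity
  set η := Real.tanh ε' / 2 with hη
  have hηpos : 0 < η := by
    have := tanh_pos' hε'pos
    positivity
  have hδpos : 0 < κ * η := by positivity
  have hu_ev : ∀ᶠ t in atTop, |u t| < η := by
    have := NormedAddCommGroup.tendsto_nhds_zero.mp hu_lim η hηpos
    simpa using this
  obtain ⟨T, hT⟩ := eventually_atTop.mp hu_ev
  have hupper : ∀ᶠ t in atTop, Δ t ≤ ε' := by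
    apply eventually_le_of_deriv' Δ hΔ ε' (κ * η) T hδpos
    intro x hx hbx
    rw [hode x]
    have h1 : Real.tanh ε' ≤ Real.tanh (Δ x) := tanh_mono' hbx.le
    have h2 : |u x| < η := hT x hx
    have h3 : u x < η := (le_abs_self _).trans_lt h2
    have : η ≤ Real.tanh (Δ x) - u x := by
      rw [hη] at *
      linarith
    nlinarith
  have hlower : ∀ᶠ t in atTop, -Δ t ≤ ε' := by
    apply eventually_le_of_deriv' (fun t => -Δ t) hΔ.neg ε' (κ * η) T hδpos
    intro x hx hbx
    have hderiv : deriv (fun t => -Δ t) x = -deriv Δ x := by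
      simpa using (deriv.neg (f := Δ) (x := x))
    rw [hderiv, hode x]
    have hΔx : Δ x ≤ -ε' := by linarith
    have h1 : Real.tanh (Δ x) ≤ Real.tanh (-ε') := tanh_mono' hΔx
    rw [Real.tanh_neg] at h1
    have h2 : |u x| < η := hT x hx
    have h3 : -η < u x := by
      have := (neg_abs_le (u x))
      linarith [abs_lt.mp h2]
    have : Real.tanh (Δ x) - u x ≤ -η := by
      rw [hη] at *
      linarith
    nlinarith
  filter_upwards [hupper, hlower] with t h1 h2
  have : |Δ t| ≤ ε' := abs_le.2 ⟨by linarith, h1⟩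
  calc ‖Δ t‖ = |Δ t| := rfl
    _ ≤ ε' := this
    _ < ε := by rw [hε']; linarith
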